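/- arXiv:1011.0191 — 4 statements merged into one kernel-verified Lean document; each statement's English description precedes it below -/
import Mathlib

section
/- Let A₁, A₂, A₃ ∈ ℂ[x,y,z] be polynomials, each a product of linear forms, with A₁ and A₂ nonconstant, such that all the occurring linear forms are pairwise non-proportional and for every nonzero P ∈ ℂ³ at most 3 of the forms vanish at P. If there exist nonzero homogeneous polynomials f, g, h ∈ ℂ[x,y,z] with A₁f³ + A₂g³ + A₃h³ = 0, then deg A₁ = deg A₂ = deg A₃ and there exist constants λ₂, λ₃ ∈ ℂ with A₁ = λ₂A₂ + λ₃A₃; that is, A₁, A₂, A₃ belong to a pencil. -/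
/-!
Let `ℓ` be a line of `A₂` and let `Ψ` be a substitution of the variables whose kernel consists of
the multiples of `ℓ`. Since `ℓ` divides `A₂` exactly once, comparing `ℓ`-adic valuations shows
that, after removing the common power of `ℓ` from `f` and `h`, the equation restricts to
`Ψ(A₁) f'³ + Ψ(A₃) h'³ = 0` with `f', h'` nonzero. At most three lines pass through a point and
`ℓ` is one of them, so no prime divides `Ψ(A₁)` or `Ψ(A₃)` three times; unique factorization then
gives `Ψ(A₁) = c Ψ(A₃)`, that is `deg A₁ = deg A₃` and `ℓ ∣ A₁ - c A₃`. The constant `c` does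
not depend on `ℓ`: two lines of `A₂` meet at a point where `A₃` does not vanish, as otherwise four
lines would be concurrent there. Hence `A₂ ∣ A₁ - c A₃`, and comparing degrees,
`A₁ - c A₃ = λ A₂`. The same argument with a line of `A₁` gives `deg A₂ = deg A₃`.
-/

section UniqueFactorization

variable {α : Type*}

theorem emultiplicity_pow_mul_of_not_dvd [CommMonoidWithZero α] [IsCancelMulZero α] {p u : α}
    (hp : Prime p) (hu : ¬p ∣ u) (k : ℕ) :
    emultiplicity p (p ^ k * u) = k := by
  rw [emultiplicity_mul hp, emultiplicity_pow_self_of_prime hp, emultiplicity_eq_zero.2 hu,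
    add_zero]

theorem exists_eq_pow_mul_and_not_dvd_or [CommMonoidWithZero α] [WfDvdMonoid α] {p x y : α}
    (hp : Irreducible p) (hx : x ≠ 0) (hy : y ≠ 0) :
    ∃ k x' y', x = p ^ k * x' ∧ y = p ^ k * y' ∧ (¬p ∣ x' ∨ ¬p ∣ y') := by
  obtain ⟨i, x₀, hx₀, rfl⟩ := WfDvdMonoid.max_power_factor hx hp
  obtain ⟨j, y₀, hy₀, rfl⟩ := WfDvdMonoid.max_power_factor hy hp
  rcases le_total i j with hij | hji
  · exact ⟨i, x₀, p ^ (j - i) * y₀, rfl,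
      by rw [← mul_assoc, ← pow_add, Nat.add_sub_cancel' hij], Or.inl hx₀⟩
  · exact ⟨j, p ^ (i - j) * x₀, y₀,
      by rw [← mul_assoc, ← pow_add, Nat.add_sub_cancel' hji], rfl, Or.inr hy₀⟩

theorem associated_of_mul_pow_eq_mul_pow [CommMonoidWithZero α] [UniqueFactorizationMonoid α]
    {n : ℕ} {a b x y : α} (ha : a ≠ 0) (hb : b ≠ 0) (hx : x ≠ 0) (hy : y ≠ 0)
    (ha' : ∀ p, Prime p → emultiplicity p a < n) (hb' : ∀ p, Prime p → emultiplicity p b < n)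
    (h : a * x ^ n = b * y ^ n) : Associated a b := by
  have key : ∀ p, Prime p → emultiplicity p a = emultiplicity p b := by
    intro p hp
    have hv := congrArg (emultiplicity p) h
    have ha'' := ha' p hp
    have hb'' := hb' p hp
    simp only [emultiplicity_mul hp, emultiplicity_pow hp,
      (FiniteMultiplicity.of_prime_left hp ha).emultiplicity_eq_multiplicity,
      (FiniteMultiplicity.of_prime_left hp hb).emultiplicity_eq_multiplicity,
      (FiniteMultiplicity.of_prime_left hp hx).emultiplicity_eq_multiplicity,
      (FiniteMultiplicity.of_prime_left hp hy).emultiplicity_eq_multiplicity] at hv ha'' hb'' ⊢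
    norm_cast at hv ha'' hb'' ⊢
    -- `v_p a ≡ v_p b (mod n)`, and both are `< n`.
    have := congrArg (· % n) hv
    simpa [Nat.add_mul_mod_self_left, Nat.mod_eq_of_lt, ha'', hb''] using this
  exact associated_of_dvd_dvd
    ((UniqueFactorizationMonoid.dvd_iff_emultiplicity_le ha).2 fun p hp ↦ (key p hp).le)
    ((UniqueFactorizationMonoid.dvd_iff_emultiplicity_le hb).2 fun p hp ↦ (key p hp).ge)

theorem Prime.exists_dvd_of_add_mul_pow_eq_zero {R : Type*} [CommRing R] [IsDomain R]
    [WfDvdMonoid R] {n : ℕ} {p a b c x y z : R} (hp : Prime p) (hn : 1 < n) (hx : x ≠ 0)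
    (hy : y ≠ 0) (hz : z ≠ 0) (hc : ¬p ∣ c) (h : a * x ^ n + b * y ^ n + p * c * z ^ n = 0) :
    ∃ x' y', (¬p ∣ x' ∨ ¬p ∣ y') ∧ p ∣ a * x' ^ n + b * y' ^ n := by
  obtain ⟨k, x', y', rfl, rfl, hxy⟩ := exists_eq_pow_mul_and_not_dvd_or hp.irreducible hx hy
  obtain ⟨m, z', hz', rfl⟩ := WfDvdMonoid.max_power_factor hz hp.irreducible
  refine ⟨x', y', hxy, by_contra fun hU ↦ ?_⟩
  have hcz : ¬p ∣ -(c * z' ^ n) := by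
    rw [dvd_neg]
    exact fun hd ↦ (hp.dvd_or_dvd hd).elim hc fun h' ↦ hz' (hp.dvd_of_dvd_pow h')
  have hv := congrArg (emultiplicity p) (show p ^ (k * n) * (a * x' ^ n + b * y' ^ n)
      = p ^ (m * n + 1) * -(c * z' ^ n) by linear_combination h)
  rw [emultiplicity_pow_mul_of_not_dvd hp hU, emultiplicity_pow_mul_of_not_dvd hp hcz] at hv
  -- The two sides have valuations `k n` and `m n + 1`, which differ modulo `n`.
  have := congrArg (· % n) (Nat.cast_injective hv)
  simp [Nat.mul_mod_left, Nat.add_mod, Nat.mod_eq_of_lt hn] at this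

end UniqueFactorization

open MvPolynomial

namespace MvPolynomial

variable {σ K : Type*} [Field K]

theorem exists_eq_sum_smul_X_of_isHomogeneous_one {R : Type*} [CommSemiring R] [Fintype σ]
    {p : MvPolynomial σ R} (hp : p.IsHomogeneous 1) : ∃ c : σ → R, p = ∑ i, c i • X i := by
  have hmem : p ∈ Submodule.span R (Set.range X) := by
    rw [← homogeneousSubmodule_one_eq_span_X]
    exact hp
  obtain ⟨c, hc⟩ := (Submodule.mem_span_range_iff_exists_fun R).1 hmem
  exact ⟨c, hc.symm⟩

theorem dvd_sub_aeval_of_forall_dvd {R : Type*} [CommRing R] {p : MvPolynomial σ R}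
    {w : σ → MvPolynomial σ R} (hw : ∀ i, p ∣ X i - w i) (q : MvPolynomial σ R) :
    p ∣ q - aeval w q := by
  have hmk : (Ideal.Quotient.mkₐ R (Ideal.span {p})).comp (aeval w)
      = Ideal.Quotient.mkₐ R (Ideal.span {p}) := by
    ext i
    rw [AlgHom.comp_apply, aeval_X, Ideal.Quotient.mkₐ_eq_mk, Ideal.Quotient.eq,
      Ideal.mem_span_singleton, ← dvd_neg, neg_sub]
    exact hw i
  rw [← Ideal.mem_span_singleton, ← Ideal.Quotient.eq]
  exact (AlgHom.congr_fun hmk q).symm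

theorem prime_of_isHomogeneous_one {p : MvPolynomial σ K} (hp : p.IsHomogeneous 1)
    (hp0 : p ≠ 0) : Prime p := by
  refine UniqueFactorizationMonoid.irreducible_iff_prime.1
    (irreducible_of_totalDegree_eq_one (hp.totalDegree hp0) fun x hx ↦ ?_)
  obtain ⟨d, hd⟩ := exists_coeff_ne_zero hp0
  exact isUnit_iff_ne_zero.2 fun h0 ↦ hd (zero_dvd_iff.1 (h0 ▸ hx d))

theorem exists_C_mul_eq_of_associated {p q : MvPolynomial σ K} (h : Associated p q) :
    ∃ c : K, q = C c * p := by
  obtain ⟨u, rfl⟩ := h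
  obtain ⟨c, -, hc⟩ := isUnit_iff_eq_C_of_isReduced.1 u.isUnit
  exact ⟨c, by rw [hc, mul_comm]⟩

theorem exists_ne_zero_forall_eval_eq_zero {ι : Type*} [Fintype ι] [Fintype σ]
    (hcard : Fintype.card ι < Fintype.card σ) {L : ι → MvPolynomial σ K}
    (hL : ∀ i, (L i).IsHomogeneous 1) : ∃ P : σ → K, P ≠ 0 ∧ ∀ i, eval P (L i) = 0 := by
  choose c hc using fun i ↦ exists_eq_sum_smul_X_of_isHomogeneous_one (hL i)
  have hker : LinearMap.ker (Matrix.of c).mulVecLin ≠ ⊥ :=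
    LinearMap.ker_ne_bot_of_finrank_lt (by simpa using hcard)
  obtain ⟨P, hP, hP0⟩ := (Submodule.ne_bot_iff _).1 hker
  refine ⟨P, hP0, fun i ↦ ?_⟩
  have := congrFun (LinearMap.mem_ker.1 hP) i
  simpa [hc i, eval_sum, Matrix.mulVec, dotProduct] using this

theorem exists_algHom_eq_zero_iff_dvd [Fintype σ] {L : MvPolynomial σ K}
    (hL : L.IsHomogeneous 1) (hL0 : L ≠ 0) :
    ∃ Ψ : MvPolynomial σ K →ₐ[K] MvPolynomial σ K,
      (∀ P, Ψ P = 0 ↔ L ∣ P) ∧ ∀ P m, P.IsHomogeneous m → (Ψ P).IsHomogeneous m := by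
  classical
  obtain ⟨c, hc⟩ := exists_eq_sum_smul_X_of_isHomogeneous_one (R := K) hL
  obtain ⟨k, hk⟩ : ∃ k, c k ≠ 0 := by
    by_contra! hc0
    exact hL0 (by simp [hc, hc0])
  -- `Ψ` kills `L` and is the identity modulo `L`, so its kernel is `(L)`.
  let a : σ → K := Pi.single k (c k)⁻¹
  let w : σ → MvPolynomial σ K := fun i ↦ X i - C (a i) * L
  have hΨL : aeval w L = 0 := by
    have hsum : ∑ i, c i * a i = 1 := by simp [a, Pi.single_apply, hk]
    calc aeval w L = ∑ i, c i • X i - (∑ i, c i * a i) • L := by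
          conv_lhs => rw [hc]
          simp_rw [map_sum, map_smul, aeval_X]
          simp only [w, ← smul_eq_C_mul, smul_sub, Finset.sum_sub_distrib, Finset.sum_smul,
            mul_smul]
      _ = 0 := by rw [hsum, one_smul, ← hc, sub_self]
  refine ⟨aeval w, fun P ↦ ⟨fun hP ↦ ?_, ?_⟩, fun P m hP ↦ ?_⟩
  · have : L ∣ P - aeval w P := dvd_sub_aeval_of_forall_dvd
      (fun i ↦ ⟨C (a i), (sub_sub_cancel _ _).trans (mul_comm _ _)⟩) P
    rwa [hP, sub_zero] at this
  · rintro ⟨Q, rfl⟩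
    rw [map_mul, hΨL, zero_mul]
  · have hw : ∀ i, (w i).IsHomogeneous 1 := fun i ↦
      (isHomogeneous_X K i).sub (zero_add 1 ▸ (isHomogeneous_C σ (a i)).mul hL)
    simpa using hP.aeval w hw

theorem exists_C_mul_eq_of_dvd_of_isHomogeneous {A B : MvPolynomial σ K} {d : ℕ}
    (hA : A.IsHomogeneous d) (hB : B.IsHomogeneous d) (hB0 : B ≠ 0) (h : B ∣ A) :
    ∃ c : K, A = C c * B := by
  obtain ⟨Q, rfl⟩ := h
  obtain rfl | hQ := eq_or_ne Q 0
  · exact ⟨0, by simp⟩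
  have hdeg := totalDegree_mul_of_isDomain hB0 hQ
  rw [hA.totalDegree (mul_ne_zero hB0 hQ), hB.totalDegree hB0] at hdeg
  exact ⟨coeff 0 Q, by rw [← totalDegree_eq_zero_iff_eq_C.1 (by omega), mul_comm]⟩

theorem eval_eq_zero_of_associated_map {Ψ : MvPolynomial σ K →ₐ[K] MvPolynomial σ K}
    {ℓ M N : MvPolynomial σ K} (hΨ : ∀ P, Ψ P = 0 ↔ ℓ ∣ P) (h : Associated (Ψ M) (Ψ N))
    {P : σ → K} (hℓ : eval P ℓ = 0) (hM : eval P M = 0) : eval P N = 0 := by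
  obtain ⟨c, hc⟩ := exists_C_mul_eq_of_associated h
  obtain ⟨Q, hQ⟩ := (hΨ (N - C c * M)).1 (by rw [map_sub, map_mul, algHom_C, algebraMap_eq, hc,
    sub_self])
  simpa [hℓ, hM] using congrArg (eval P) hQ

end MvPolynomial

namespace LineArrangement

def PairwiseNonProportional {ι σ K : Type*} [CommSemiring K] (L : ι → MvPolynomial σ K) : Prop :=
  ∀ i j, i ≠ j → ∀ c : K, L i ≠ C c * L j

def AtMostThreeConcurrent {ι σ K : Type*} [Fintype ι] [CommSemiring K] [DecidableEq K]
    (L : ι → MvPolynomial σ K) : Prop :=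
  ∀ P : σ → K, P ≠ 0 → (Finset.univ.filter fun i ↦ eval P (L i) = 0).card ≤ 3

variable {K : Type*} [Field K] {n : ℕ} {L : Fin n → MvPolynomial (Fin 3) K}

theorem isHomogeneous_prod_card (hL1 : ∀ i, (L i).IsHomogeneous 1) (s : Finset (Fin n)) :
    (∏ i ∈ s, L i).IsHomogeneous s.card := by
  simpa using IsHomogeneous.prod s L (fun _ ↦ 1) fun i _ ↦ hL1 i

theorem card_le_three [DecidableEq K] (hmult : AtMostThreeConcurrent L) {P : Fin 3 → K}
    (hP : P ≠ 0) {T : Finset (Fin n)} (hT : ∀ i ∈ T, eval P (L i) = 0) : T.card ≤ 3 :=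
  (Finset.card_le_card fun i hi ↦ Finset.mem_filter.2 ⟨Finset.mem_univ i, hT i hi⟩).trans
    (hmult P hP)

theorem eq_of_dvd_sub_C_mul [DecidableEq K] (hL1 : ∀ i, (L i).IsHomogeneous 1)
    (hmult : AtMostThreeConcurrent L) {Sa Sb : Finset (Fin n)} (hab : Disjoint Sa Sb)
    {j j' : Fin n} (hjj' : j ≠ j') (hja : j ∉ Sa) (hjb : j ∉ Sb) (hj'a : j' ∉ Sa)
    (hj'b : j' ∉ Sb) {c c' : K} (hc : L j ∣ ∏ i ∈ Sa, L i - C c * ∏ i ∈ Sb, L i)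
    (hc' : L j' ∣ ∏ i ∈ Sa, L i - C c' * ∏ i ∈ Sb, L i) : c = c' := by
  obtain ⟨P, hP, hPL⟩ := exists_ne_zero_forall_eval_eq_zero (ι := Fin 2) (by simp)
    (L := ![L j, L j']) (by simp [Fin.forall_fin_two, hL1])
  have hev : ∀ {k d}, L k ∣ ∏ i ∈ Sa, L i - C d * ∏ i ∈ Sb, L i → eval P (L k) = 0 →
      eval P (∏ i ∈ Sa, L i) = d * eval P (∏ i ∈ Sb, L i) := by
    rintro k d ⟨Q, hQ⟩ hi
    have := congrArg (eval P) hQ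
    simp only [map_sub, map_mul, eval_C, hi, zero_mul] at this
    linear_combination this
  have h := hev hc (by simpa using hPL 0)
  have h' := hev hc' (by simpa using hPL 1)
  by_cases hB : eval P (∏ i ∈ Sb, L i) = 0
  · exfalso
    rw [hB, mul_zero, map_prod] at h
    rw [map_prod] at hB
    obtain ⟨a, ha, hPa⟩ := Finset.prod_eq_zero_iff.1 h
    obtain ⟨b, hb, hPb⟩ := Finset.prod_eq_zero_iff.1 hB
    have hcard : ({j, j', a, b} : Finset (Fin n)).card = 4 := by
      have hab' : a ≠ b := fun h ↦ Finset.disjoint_left.1 hab ha (h ▸ hb)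
      rw [Finset.card_insert_of_notMem, Finset.card_insert_of_notMem, Finset.card_pair hab']
      · simp [(ne_of_mem_of_not_mem ha hj'a).symm, (ne_of_mem_of_not_mem hb hj'b).symm]
      · simp [hjj', (ne_of_mem_of_not_mem ha hja).symm, (ne_of_mem_of_not_mem hb hjb).symm]
    have := card_le_three hmult hP (T := {j, j', a, b}) (by
      simp [hPa, hPb, show eval P (L j) = 0 by simpa using hPL 0,
        show eval P (L j') = 0 by simpa using hPL 1])
    omega
  · exact mul_right_cancel₀ hB (h.symm.trans h')

section Lines

variable (hL0 : ∀ i, L i ≠ 0) (hL1 : ∀ i, (L i).IsHomogeneous 1)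
  (hprop : PairwiseNonProportional L)
include hL0 hL1 hprop

theorem not_dvd_of_ne {i j : Fin n} (hij : i ≠ j) : ¬L j ∣ L i := fun h ↦ by
  obtain ⟨c, hc⟩ := exists_C_mul_eq_of_associated <|
    (prime_of_isHomogeneous_one (hL1 j) (hL0 j)).associated_of_dvd
      (prime_of_isHomogeneous_one (hL1 i) (hL0 i)) h
  exact hprop i j hij c hc

theorem not_dvd_prod {j : Fin n} {s : Finset (Fin n)} (hj : j ∉ s) :
    ¬L j ∣ ∏ i ∈ s, L i := fun h ↦ by
  obtain ⟨i, hi, hdvd⟩ := (prime_of_isHomogeneous_one (hL1 j) (hL0 j)).exists_mem_finset_dvd h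
  exact not_dvd_of_ne hL0 hL1 hprop (ne_of_mem_of_not_mem hi hj) hdvd

theorem emultiplicity_map_prod_lt_three [DecidableEq K] (hmult : AtMostThreeConcurrent L)
    {Ψ : MvPolynomial (Fin 3) K →ₐ[K] MvPolynomial (Fin 3) K} {j : Fin n}
    (hΨ : ∀ P, Ψ P = 0 ↔ L j ∣ P) (hΨhom : ∀ P m, P.IsHomogeneous m → (Ψ P).IsHomogeneous m) {s : Finset (Fin n)}
    (hj : j ∉ s) {p : MvPolynomial (Fin 3) K} (hp : Prime p) :
    emultiplicity p (Ψ (∏ i ∈ s, L i)) < 3 := by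
  classical
  have hprime : ∀ i ∈ s, Prime (Ψ (L i)) := fun i hi ↦ prime_of_isHomogeneous_one
    (hΨhom _ _ (hL1 i))
    fun h ↦ not_dvd_of_ne hL0 hL1 hprop (ne_of_mem_of_not_mem hi hj) ((hΨ _).1 h)
  set T := s.filter fun i ↦ p ∣ Ψ (L i)
  have hle : emultiplicity p (Ψ (∏ i ∈ s, L i)) ≤ T.card := by
    rw [map_prod, Finset.emultiplicity_prod hp, Finset.card_filter]
    push_cast
    gcongr with i hi
    split_ifs with h
    · rw [emultiplicity_eq_of_associated_right (hp.associated_of_dvd (hprime i hi) h).symm]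
      simpa using (emultiplicity_pow_self_of_prime hp 1).le
    · rw [emultiplicity_eq_zero.2 h]
  -- The lines of `T` pass through the common zero of `L j` and `L i₀`, and so does `L j`.
  have hT : T.card < 3 := by
    obtain hT | ⟨i₀, hi₀⟩ := T.eq_empty_or_nonempty
    · simp [hT]
    obtain ⟨P, hP, hPL⟩ := exists_ne_zero_forall_eval_eq_zero (ι := Fin 2) (by simp)
      (L := ![L j, L i₀]) (by simp [Fin.forall_fin_two, hL1])
    have hi₀' := Finset.mem_filter.1 hi₀
    have hvan : ∀ i ∈ insert j T, eval P (L i) = 0 := by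
      intro i hi
      obtain rfl | hi := Finset.mem_insert.1 hi
      · simpa using hPL 0
      have hi' := Finset.mem_filter.1 hi
      exact eval_eq_zero_of_associated_map hΨ (((hp.associated_of_dvd (hprime _ hi₀'.1)
        hi₀'.2).symm).trans (hp.associated_of_dvd (hprime _ hi'.1) hi'.2)) (by simpa using hPL 0)
        (by simpa using hPL 1)
    have := card_le_three hmult hP hvan
    rw [Finset.card_insert_of_notMem (s := T) fun h ↦ hj (Finset.mem_filter.1 h).1] at this
    omega
  exact hle.trans_lt (by exact_mod_cast hT)

theorem card_eq_and_exists_dvd_sub_of_catalan [DecidableEq K] (hmult : AtMostThreeConcurrent L)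
    {Sa Sb Sc : Finset (Fin n)} {j : Fin n} (hja : j ∉ Sa) (hjb : j ∉ Sb) (hjc : j ∈ Sc)
    {F G g : MvPolynomial (Fin 3) K} (hF : F ≠ 0) (hG : G ≠ 0) (hg : g ≠ 0)
    (heq : (∏ i ∈ Sa, L i) * F ^ 3 + (∏ i ∈ Sb, L i) * G ^ 3 + (∏ i ∈ Sc, L i) * g ^ 3 = 0) :
    Sa.card = Sb.card ∧ ∃ c : K, L j ∣ ∏ i ∈ Sa, L i - C c * ∏ i ∈ Sb, L i := by
  classical
  obtain ⟨Ψ, hΨ, hΨhom⟩ := exists_algHom_eq_zero_iff_dvd (hL1 j) (hL0 j)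
  have hΨA : Ψ (∏ i ∈ Sa, L i) ≠ 0 := fun h ↦ not_dvd_prod hL0 hL1 hprop hja ((hΨ _).1 h)
  have hΨB : Ψ (∏ i ∈ Sb, L i) ≠ 0 := fun h ↦ not_dvd_prod hL0 hL1 hprop hjb ((hΨ _).1 h)
  rw [← Finset.mul_prod_erase Sc L hjc] at heq
  obtain ⟨x, y, hxy, hdvd⟩ :=
    (prime_of_isHomogeneous_one (hL1 j) (hL0 j)).exists_dvd_of_add_mul_pow_eq_zero (by norm_num)
      hF hG hg (not_dvd_prod hL0 hL1 hprop (Finset.notMem_erase j Sc)) heq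
  have hrestr : Ψ (∏ i ∈ Sa, L i) * Ψ x ^ 3 + Ψ (∏ i ∈ Sb, L i) * Ψ y ^ 3 = 0 := by
    simpa using (hΨ _).2 hdvd
  have hΨxy : Ψ x ≠ 0 ∧ Ψ y ≠ 0 := by
    rcases hxy with hx | hy
    · have hx' : Ψ x ≠ 0 := fun h ↦ hx ((hΨ x).1 h)
      refine ⟨hx', fun hy' ↦ mul_ne_zero hΨA (pow_ne_zero 3 hx') ?_⟩
      rw [hy'] at hrestr
      linear_combination hrestr
    · have hy' : Ψ y ≠ 0 := fun h ↦ hy ((hΨ y).1 h)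
      refine ⟨fun hx' ↦ mul_ne_zero hΨB (pow_ne_zero 3 hy') ?_, hy'⟩
      rw [hx'] at hrestr
      linear_combination hrestr
  have hassoc : Associated (Ψ (∏ i ∈ Sb, L i)) (Ψ (∏ i ∈ Sa, L i)) :=
    associated_of_mul_pow_eq_mul_pow hΨB hΨA (neg_ne_zero.2 hΨxy.2) hΨxy.1
      (fun _ hp ↦ emultiplicity_map_prod_lt_three hL0 hL1 hprop hmult hΨ hΨhom hjb hp)
      (fun _ hp ↦ emultiplicity_map_prod_lt_three hL0 hL1 hprop hmult hΨ hΨhom hja hp)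
      (by linear_combination -hrestr)
  obtain ⟨c, hc⟩ := exists_C_mul_eq_of_associated hassoc
  refine ⟨(hΨhom _ _ (isHomogeneous_prod_card hL1 Sa)).inj_right
    (hc ▸ (hΨhom _ _ (isHomogeneous_prod_card hL1 Sb)).C_mul c) hΨA, c, (hΨ _).1 ?_⟩
  rw [map_sub, map_mul, algHom_C, algebraMap_eq, hc, sub_self]

theorem prod_dvd_of_forall_dvd {s : Finset (Fin n)} {Q : MvPolynomial (Fin 3) K}
    (h : ∀ i ∈ s, L i ∣ Q) : ∏ i ∈ s, L i ∣ Q := by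
  induction s using Finset.cons_induction with
  | empty => simp
  | cons a s ha ih =>
    obtain ⟨R, hR⟩ := ih fun i hi ↦ h i (Finset.mem_cons_of_mem hi)
    have haQ := h a (Finset.mem_cons_self a s)
    rw [hR] at haQ
    obtain ⟨R', rfl⟩ := ((prime_of_isHomogeneous_one (hL1 a) (hL0 a)).dvd_or_dvd haQ).resolve_left
      (not_dvd_prod hL0 hL1 hprop ha)
    exact ⟨R', by rw [hR, Finset.prod_cons]; ring⟩

theorem exists_prod_dvd_sub_C_mul [DecidableEq K] (hmult : AtMostThreeConcurrent L)
    {Sa Sb Sc : Finset (Fin n)} (hab : Disjoint Sa Sb) (hca : Disjoint Sc Sa)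
    (hcb : Disjoint Sc Sb) (hSc : Sc.Nonempty)
    (h : ∀ j ∈ Sc, ∃ c : K, L j ∣ ∏ i ∈ Sa, L i - C c * ∏ i ∈ Sb, L i) :
    ∃ c : K, ∏ i ∈ Sc, L i ∣ ∏ i ∈ Sa, L i - C c * ∏ i ∈ Sb, L i := by
  obtain ⟨j₁, hj₁⟩ := hSc
  obtain ⟨c, hc⟩ := h j₁ hj₁
  refine ⟨c, prod_dvd_of_forall_dvd hL0 hL1 hprop fun j hj ↦ ?_⟩
  obtain ⟨c', hc'⟩ := h j hj
  obtain rfl | hne := eq_or_ne j j₁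
  · exact hc
  rwa [eq_of_dvd_sub_C_mul hL1 hmult hab hne (Finset.disjoint_left.1 hca hj)
    (Finset.disjoint_left.1 hcb hj) (Finset.disjoint_left.1 hca hj₁)
    (Finset.disjoint_left.1 hcb hj₁) hc' hc] at hc'

end Lines

end LineArrangement

open LineArrangement in
theorem stmt5_general
    (n : ℕ) (L : Fin n → MvPolynomial (Fin 3) ℂ)
    (hL0 : ∀ i, L i ≠ 0)
    (hL1 : ∀ i, (L i).IsHomogeneous 1)
    (hprop : ∀ i j, i ≠ j → ∀ c : ℂ, L i ≠ C c * L j)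
    (hmult : ∀ P : Fin 3 → ℂ, P ≠ 0 →
      (Finset.univ.filter fun i => MvPolynomial.eval P (L i) = 0).card ≤ 3)
    (S : Fin 3 → Finset (Fin n))
    (hdisj : ∀ i j, i ≠ j → Disjoint (S i) (S j))
    (A : Fin 3 → MvPolynomial (Fin 3) ℂ)
    (hA : ∀ i, A i = ∏ j ∈ S i, L j)
    (hA1nc : ∀ c : ℂ, A 0 ≠ C c)
    (hA2nc : ∀ c : ℂ, A 1 ≠ C c)
    (f g h : MvPolynomial (Fin 3) ℂ)
    (hf : f ≠ 0) (hg : g ≠ 0) (hh : h ≠ 0)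
    (heq : A 0 * f ^ 3 + A 1 * g ^ 3 + A 2 * h ^ 3 = 0) :
    (A 0).totalDegree = (A 1).totalDegree ∧
    (A 1).totalDegree = (A 2).totalDegree ∧
    ∃ lam2 lam3 : ℂ, A 0 = C lam2 * A 1 + C lam3 * A 2 := by
  obtain rfl : A = fun i ↦ ∏ j ∈ S i, L j := funext hA
  have hS : ∀ {a b}, a ≠ b → ∀ {j}, j ∈ S a → j ∉ S b := fun hab _ hj ↦
    Finset.disjoint_left.1 (hdisj _ _ hab) hj
  have hS₁ : ∀ j ∈ S 1, (S 0).card = (S 2).card ∧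
      ∃ c : ℂ, L j ∣ ∏ i ∈ S 0, L i - C c * ∏ i ∈ S 2, L i := fun j hj ↦
    card_eq_and_exists_dvd_sub_of_catalan hL0 hL1 hprop hmult (hS (by decide) hj)
      (hS (by decide) hj) hj hf hh hg (by linear_combination heq)
  obtain ⟨j₀, hj₀⟩ : (S 0).Nonempty :=
    Finset.nonempty_iff_ne_empty.2 fun h₀ ↦ hA1nc 1 (by simp [h₀])
  obtain ⟨j₁, hj₁⟩ : (S 1).Nonempty :=
    Finset.nonempty_iff_ne_empty.2 fun h₁ ↦ hA2nc 1 (by simp [h₁])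
  have h₁₂ := (card_eq_and_exists_dvd_sub_of_catalan (Sa := S 1) (Sb := S 2) (Sc := S 0)
    hL0 hL1 hprop hmult (hS (by decide) hj₀) (hS (by decide) hj₀) hj₀ hg hh hf
    (by linear_combination heq)).1
  have h₀₂ := (hS₁ j₁ hj₁).1
  obtain ⟨c, hdvd⟩ := exists_prod_dvd_sub_C_mul hL0 hL1 hprop hmult (hdisj 0 2 (by decide))
    (hdisj 1 0 (by decide)) (hdisj 1 2 (by decide)) ⟨j₁, hj₁⟩ fun j hj ↦ (hS₁ j hj).2
  have hhom := isHomogeneous_prod_card hL1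
  have hdeg : ∀ i, (∏ j ∈ S i, L j).totalDegree = (S i).card := fun i ↦
    (hhom (S i)).totalDegree (Finset.prod_ne_zero_iff.2 fun j _ ↦ hL0 j)
  refine ⟨by simp only [hdeg]; omega, by simp only [hdeg]; omega, ?_⟩
  obtain ⟨lam, hlam⟩ := exists_C_mul_eq_of_dvd_of_isHomogeneous
    ((hhom (S 0)).sub (h₀₂ ▸ (hhom (S 2)).C_mul c)) ((h₀₂.trans h₁₂.symm) ▸ hhom (S 1))
    (Finset.prod_ne_zero_iff.2 fun j _ ↦ hL0 j) hdvd
  exact ⟨lam, c, by linear_combination hlam⟩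

/-- if the Catalan equation `A₁f³ + A₂g³ + A₃h³ = 0` with `A₁, A₂` nonconstant
products of pairwise non-proportional linear forms (the arrangement having only points of
multiplicity 2 and 3) has a solution in nonzero homogeneous polynomials, then the three
coefficients have the same degree and belong to a pencil: `A₁ = λ₂A₂ + λ₃A₃`. -/
theorem stmt5
    (n : ℕ) (L : Fin n → MvPolynomial (Fin 3) ℂ)
    (hL0 : ∀ i, L i ≠ 0)
    (hL1 : ∀ i, (L i).IsHomogeneous 1)
    (hprop : ∀ i j, i ≠ j → ∀ c : ℂ, L i ≠ C c * L j)
    (hmult : ∀ P : Fin 3 → ℂ, P ≠ 0 →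
      (Finset.univ.filter fun i => MvPolynomial.eval P (L i) = 0).card ≤ 3)
    (S : Fin 3 → Finset (Fin n))
    (hdisj : ∀ i j, i ≠ j → Disjoint (S i) (S j))
    (hcover : S 0 ∪ S 1 ∪ S 2 = Finset.univ)
    (A : Fin 3 → MvPolynomial (Fin 3) ℂ)
    (hA : ∀ i, A i = ∏ j ∈ S i, L j)
    (hA1nc : ∀ c : ℂ, A 0 ≠ C c)
    (hA2nc : ∀ c : ℂ, A 1 ≠ C c)
    (f g h : MvPolynomial (Fin 3) ℂ)
    (hf : f ≠ 0) (hg : g ≠ 0) (hh : h ≠ 0)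
    (hfhom : ∃ d, f.IsHomogeneous d)
    (hghom : ∃ d, g.IsHomogeneous d)
    (hhhom : ∃ d, h.IsHomogeneous d)
    (heq : A 0 * f ^ 3 + A 1 * g ^ 3 + A 2 * h ^ 3 = 0) :
    (A 0).totalDegree = (A 1).totalDegree ∧
    (A 1).totalDegree = (A 2).totalDegree ∧
    ∃ lam2 lam3 : ℂ, A 0 = C lam2 * A 1 + C lam3 * A 2 :=
  stmt5_general n L hL0 hL1 hprop hmult S hdisj A hA hA1nc hA2nc f g h hf hg hh heq
end

section
/- Let A₁, A₂, A₃ ∈ ℂ[x,y,z] be polynomials, each a product of linear forms, with A₁ nonconstant, such that all the occurring linear forms are pairwise non-proportional and for every nonzero P ∈ ℂ³ at most 3 of the forms vanish at P. Suppose there exist nonzero homogeneous polynomials f, g, h ∈ ℂ[x,y,z] with A₁f³ + A₂g³ + A₃h³ = 0. Then for every nonzero point P ∈ ℂ³: if A₁(P) = 0 and A₂(P) = 0 then A₃(P) = 0, and if A₁(P) = 0 and A₃(P) = 0 then A₂(P) = 0. In other words, every intersection point of the curve A₁ = 0 with one of the curves A₂ = 0, A₃ = 0 also lies on the other. -/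
/-!
Suppose `A₁(P) = A₂(P) = 0` but `A₃(P) ≠ 0`, and substitute `x ↦ P + t • x`. The order in `t` of
`Aᵢ(P + t • x)` is the number `mᵢ` of linear factors of `Aᵢ` through `P`, so the three terms of the
equation have orders `m₁ + 3a`, `m₂ + 3b` and `3c`. As `1 ≤ m₁, m₂` and `m₁ + m₂ ≤ 3`, the third
order differs from the other two, so the lowest order is attained by the first two terms only: this forces
`m₁ = m₂ = 1`, and their lowest-order coefficients cancel, `ℓ₁ c₁ F³ = -ℓ₂ c₂ G³`, with `ℓ₁, ℓ₂`
non-proportional linear forms and `c₁, c₂` nonzero constants. The prime `ℓ₁` divides the two sides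
to orders `≡ 1` and `≡ 0 (mod 3)`, a contradiction.
-/

open MvPolynomial Finset

namespace Polynomial

variable {R : Type*}

theorem natTrailingDegree_prod [CommSemiring R] [NoZeroDivisors R] [Nontrivial R] {ι : Type*}
    (s : Finset ι) (F : ι → R[X]) (hF : ∀ j ∈ s, F j ≠ 0) :
    (∏ j ∈ s, F j).natTrailingDegree = ∑ j ∈ s, (F j).natTrailingDegree := by
  classical
  induction s using Finset.induction_on with
  | empty => simp
  | insert a s ha ih =>
    rw [Finset.prod_insert ha, Finset.sum_insert ha, natTrailingDegree_mul (hF a (by simp))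
      (Finset.prod_ne_zero_iff.mpr fun j hj => hF j (by simp [hj])),
      ih fun j hj => hF j (by simp [hj])]

theorem trailingCoeff_prod [CommSemiring R] [NoZeroDivisors R] {ι : Type*} (s : Finset ι)
    (F : ι → R[X]) : (∏ j ∈ s, F j).trailingCoeff = ∏ j ∈ s, (F j).trailingCoeff := by
  classical
  induction s using Finset.induction_on with
  | empty => simp [trailingCoeff]
  | insert a s ha ih => rw [Finset.prod_insert ha, Finset.prod_insert ha, trailingCoeff_mul, ih]

theorem natTrailingDegree_pow [CommSemiring R] [NoZeroDivisors R] [Nontrivial R] {p : R[X]}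
    (hp : p ≠ 0) (n : ℕ) : (p ^ n).natTrailingDegree = n * p.natTrailingDegree := by
  simpa using natTrailingDegree_prod (Finset.range n) (fun _ => p) (fun _ _ => hp)

theorem trailingCoeff_pow [CommSemiring R] [NoZeroDivisors R] (p : R[X]) (n : ℕ) :
    (p ^ n).trailingCoeff = p.trailingCoeff ^ n := by
  simpa using trailingCoeff_prod (Finset.range n) (fun _ => p)

theorem eq_zero_of_add_add_eq_zero_of_natTrailingDegree_lt [Semiring R] {p q r : R[X]}
    (hsum : p + q + r = 0) (hq : p.natTrailingDegree < q.natTrailingDegree)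
    (hr : p.natTrailingDegree < r.natTrailingDegree) : p = 0 := by
  have := congrArg (coeff · p.natTrailingDegree) hsum
  simpa [coeff_eq_zero_of_lt_natTrailingDegree hq, coeff_eq_zero_of_lt_natTrailingDegree hr]
    using this

theorem trailingCoeff_add_eq_zero_of_add_add_eq_zero [Semiring R] {p q r : R[X]}
    (hsum : p + q + r = 0) (hp : p ≠ 0) (hq : q ≠ 0) (hr : r ≠ 0)
    (hpr : p.natTrailingDegree ≠ r.natTrailingDegree)
    (hqr : q.natTrailingDegree ≠ r.natTrailingDegree) :
    p.natTrailingDegree = q.natTrailingDegree ∧ p.trailingCoeff + q.trailingCoeff = 0 := by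
  have hqpr : q + p + r = 0 := by rw [add_comm q, hsum]
  have hrpq : r + p + q = 0 := by rw [add_assoc, add_comm]; exact hsum
  have hpq : p.natTrailingDegree = q.natTrailingDegree := by
    rcases lt_trichotomy p.natTrailingDegree q.natTrailingDegree with h | h | h
    · rcases hpr.lt_or_gt with h' | h'
      · exact absurd (eq_zero_of_add_add_eq_zero_of_natTrailingDegree_lt hsum h h') hp
      · exact absurd (eq_zero_of_add_add_eq_zero_of_natTrailingDegree_lt hrpq h' (h'.trans h)) hr
    · exact h
    · rcases hqr.lt_or_gt with h' | h'
      · exact absurd (eq_zero_of_add_add_eq_zero_of_natTrailingDegree_lt hqpr h h') hq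
      · exact absurd (eq_zero_of_add_add_eq_zero_of_natTrailingDegree_lt hrpq (h'.trans h) h') hr
  have hpr' : p.natTrailingDegree < r.natTrailingDegree := by
    refine hpr.lt_or_gt.resolve_right fun h => hr ?_
    exact eq_zero_of_add_add_eq_zero_of_natTrailingDegree_lt hrpq h (hpq ▸ h)
  refine ⟨hpq, ?_⟩
  have := congrArg (coeff · p.natTrailingDegree) hsum
  simpa [trailingCoeff, hpq, coeff_eq_zero_of_lt_natTrailingDegree (hpq ▸ hpr')] using this

end Polynomial

theorem Prime.mul_mul_pow_ne_mul_pow {α : Type*} [CommMonoidWithZero α] [IsCancelMulZero α]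
    [WfDvdMonoid α] {p a b x y : α} (hp : Prime p) (ha : ¬p ∣ a) (hb : ¬p ∣ b) (hx : x ≠ 0)
    (hy : y ≠ 0) {n : ℕ} (hn : 2 ≤ n) : p * a * x ^ n ≠ b * y ^ n := by
  intro h
  have := congrArg (emultiplicity p) h
  rw [emultiplicity_mul hp, emultiplicity_mul hp, emultiplicity_mul hp, emultiplicity_pow hp,
    emultiplicity_pow hp, (FiniteMultiplicity.of_prime_left hp hp.ne_zero).emultiplicity_self,
    emultiplicity_eq_zero.mpr ha, emultiplicity_eq_zero.mpr hb,
    (FiniteMultiplicity.of_prime_left hp hx).emultiplicity_eq_multiplicity,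
    (FiniteMultiplicity.of_prime_left hp hy).emultiplicity_eq_multiplicity, add_zero,
    zero_add] at this
  have h' : 1 + n * multiplicity p x = n * multiplicity p y := by exact_mod_cast this
  have : n ∣ 1 := (Nat.dvd_add_left (dvd_mul_right n _)).mp (h' ▸ dvd_mul_right n _)
  exact absurd (Nat.dvd_one.mp this) (by omega)

namespace MvPolynomial

variable {σ K : Type*} [Field K] {l l' : MvPolynomial σ K}

theorem prime_of_isHomogeneous_one_s6 (hl : l.IsHomogeneous 1) (hl0 : l ≠ 0) : Prime l := by
  refine UniqueFactorizationMonoid.irreducible_iff_prime.mp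
    (irreducible_of_totalDegree_eq_one (hl.totalDegree hl0) fun x hx => ?_)
  obtain ⟨d, hd⟩ := exists_coeff_ne_zero hl0
  exact isUnit_iff_ne_zero.mpr (ne_zero_of_dvd_ne_zero hd (hx d))

theorem exists_eq_C_mul_of_dvd_of_isHomogeneous_one (hl : l.IsHomogeneous 1)
    (hl' : l'.IsHomogeneous 1) (hl0 : l ≠ 0) (hl'0 : l' ≠ 0) (hdvd : l ∣ l') :
    ∃ c, l' = C c * l := by
  obtain ⟨b, rfl⟩ := hdvd
  have hb : b ≠ 0 := right_ne_zero_of_mul hl'0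
  have : b.totalDegree = 0 := by
    have := totalDegree_mul_of_isDomain hl0 hb
    rw [hl.totalDegree hl0, hl'.totalDegree hl'0] at this
    omega
  exact ⟨b.coeff 0, by rw [mul_comm, ← totalDegree_eq_zero_iff_eq_C.mp this]⟩

theorem mul_C_mul_pow_add_mul_C_mul_pow_ne_zero (hl : l.IsHomogeneous 1)
    (hl' : l'.IsHomogeneous 1) (hl0 : l ≠ 0) (hl'0 : l' ≠ 0) (hprop : ∀ c, l' ≠ C c * l)
    {c c' : K} (hc : c ≠ 0) (hc' : c' ≠ 0) {x y : MvPolynomial σ K} (hx : x ≠ 0) (hy : y ≠ 0)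
    {n : ℕ} (hn : 2 ≤ n) : l * C c * x ^ n + l' * C c' * y ^ n ≠ 0 := by
  have hp := prime_of_isHomogeneous_one_s6 hl hl0
  have hpC {c : K} (hc : c ≠ 0) : ¬l ∣ C c :=
    fun hdvd => hp.not_isUnit (isUnit_of_dvd_unit hdvd (hc.isUnit.map C))
  have hpl' : ¬l ∣ l' := fun hdvd =>
    (exists_eq_C_mul_of_dvd_of_isHomogeneous_one hl hl' hl0 hl'0 hdvd).elim hprop
  have hpb : ¬l ∣ -(l' * C c') := by
    rw [dvd_neg]
    exact fun hdvd => (hp.dvd_or_dvd hdvd).elim hpl' (hpC hc')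
  intro h
  exact hp.mul_mul_pow_ne_mul_pow (hpC hc) hpb hx hy hn
    (by rw [neg_mul, eq_neg_of_add_eq_zero_left h])

/-- `p ↦ p(P + t • x)`, a polynomial in `t` whose coefficients are polynomials in `x`. -/
noncomputable def expandAt (P : σ → K) : MvPolynomial σ K →ₐ[K] Polynomial (MvPolynomial σ K) :=
  aeval fun i => Polynomial.C (X i) * Polynomial.X + Polynomial.C (C (P i))

variable (P : σ → K)

theorem aeval_sub_eval_one_expandAt (p : MvPolynomial σ K) :
    aeval (fun i => X i - C (P i)) ((expandAt P p).eval 1) = p := by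
  have : (aeval fun i => X i - C (P i)).toRingHom.comp
      ((Polynomial.evalRingHom 1).comp (expandAt P).toRingHom) = RingHom.id _ := by
    apply ringHom_ext
    · intro a; simp [expandAt]
    · intro i; simp [expandAt]
  exact RingHom.congr_fun this p

theorem expandAt_injective : Function.Injective (expandAt P) := by
  intro p q h
  rw [← aeval_sub_eval_one_expandAt P p, ← aeval_sub_eval_one_expandAt P q, h]

theorem coeff_zero_expandAt (p : MvPolynomial σ K) : (expandAt P p).coeff 0 = C (eval P p) := by
  have : (Polynomial.evalRingHom 0).comp (expandAt P).toRingHom = C.comp (eval P) := by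
    apply ringHom_ext
    · intro a; simp [expandAt]
    · intro i; simp [expandAt]
  rw [Polynomial.coeff_zero_eq_eval_zero]
  exact RingHom.congr_fun this p

theorem expandAt_of_isHomogeneous_one (hl : l.IsHomogeneous 1) :
    expandAt P l = Polynomial.C l * Polynomial.X + Polynomial.C (C (eval P l)) := by
  have hspan : l ∈ Submodule.span K (Set.range X) := by
    rw [← homogeneousSubmodule_one_eq_span_X]; exact hl
  clear hl
  induction hspan using Submodule.span_induction with
  | mem x hx => obtain ⟨i, rfl⟩ := hx; simp [expandAt]
  | zero => simp
  | add x y _ _ hx hy => simp only [map_add, hx, hy]; ring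
  | smul a x _ hx =>
    rw [map_smul, hx]
    simp only [Algebra.smul_def, Polynomial.algebraMap_apply, algebraMap_eq, map_mul, eval_C]
    ring

theorem expandAt_ne_zero {p : MvPolynomial σ K} (hp : p ≠ 0) : expandAt P p ≠ 0 :=
  (map_ne_zero_iff _ (expandAt_injective P)).mpr hp

variable [DecidableEq K]

theorem natTrailingDegree_expandAt_of_isHomogeneous_one (hl : l.IsHomogeneous 1) (hl0 : l ≠ 0) :
    (expandAt P l).natTrailingDegree = if eval P l = 0 then 1 else 0 := by
  split_ifs with h
  · rw [expandAt_of_isHomogeneous_one P hl, h, map_zero, map_zero, add_zero,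
      Polynomial.C_mul_X_eq_monomial, Polynomial.natTrailingDegree_monomial hl0]
  · simp [coeff_zero_expandAt, h]

theorem trailingCoeff_expandAt_of_isHomogeneous_one (hl : l.IsHomogeneous 1) (hl0 : l ≠ 0) :
    (expandAt P l).trailingCoeff = if eval P l = 0 then l else C (eval P l) := by
  split_ifs with h
  · rw [expandAt_of_isHomogeneous_one P hl, h, map_zero, map_zero, add_zero]
    rw [Polynomial.C_mul_X_eq_monomial, Polynomial.trailingCoeff,
      Polynomial.natTrailingDegree_monomial hl0, Polynomial.coeff_monomial_same]
  · rw [Polynomial.trailingCoeff_eq_coeff_zero] <;> simp [coeff_zero_expandAt, h]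

variable {ι : Type*} {L : ι → MvPolynomial σ K}

theorem natTrailingDegree_expandAt_prod (hL0 : ∀ j, L j ≠ 0) (hL1 : ∀ j, (L j).IsHomogeneous 1)
    (s : Finset ι) :
    (expandAt P (∏ j ∈ s, L j)).natTrailingDegree = #{j ∈ s | eval P (L j) = 0} := by
  rw [map_prod, Polynomial.natTrailingDegree_prod _ _ fun j _ => expandAt_ne_zero P (hL0 j),
    card_filter]
  exact sum_congr rfl fun j _ => natTrailingDegree_expandAt_of_isHomogeneous_one P (hL1 j) (hL0 j)

theorem trailingCoeff_expandAt_prod (hL0 : ∀ j, L j ≠ 0) (hL1 : ∀ j, (L j).IsHomogeneous 1)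
    (s : Finset ι) :
    (expandAt P (∏ j ∈ s, L j)).trailingCoeff =
      (∏ j ∈ s with eval P (L j) = 0, L j) * C (∏ j ∈ s with eval P (L j) ≠ 0, eval P (L j)) := by
  rw [map_prod, Polynomial.trailingCoeff_prod, map_prod, ← prod_ite]
  exact prod_congr rfl fun j _ => trailingCoeff_expandAt_of_isHomogeneous_one P (hL1 j) (hL0 j)

theorem natTrailingDegree_expandAt_prod_mul_pow (hL0 : ∀ j, L j ≠ 0)
    (hL1 : ∀ j, (L j).IsHomogeneous 1) (s : Finset ι) {f : MvPolynomial σ K} (hf : f ≠ 0)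
    (n : ℕ) : (expandAt P ((∏ j ∈ s, L j) * f ^ n)).natTrailingDegree =
      #{j ∈ s | eval P (L j) = 0} + n * (expandAt P f).natTrailingDegree := by
  rw [map_mul, map_pow, Polynomial.natTrailingDegree_mul
    (expandAt_ne_zero P (prod_ne_zero_iff.mpr fun j _ => hL0 j)) (pow_ne_zero _
    (expandAt_ne_zero P hf)), Polynomial.natTrailingDegree_pow (expandAt_ne_zero P hf),
    natTrailingDegree_expandAt_prod P hL0 hL1]

theorem trailingCoeff_expandAt_prod_mul_pow (hL0 : ∀ j, L j ≠ 0)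
    (hL1 : ∀ j, (L j).IsHomogeneous 1) (s : Finset ι) (f : MvPolynomial σ K) (n : ℕ) :
    (expandAt P ((∏ j ∈ s, L j) * f ^ n)).trailingCoeff =
      (∏ j ∈ s with eval P (L j) = 0, L j) * C (∏ j ∈ s with eval P (L j) ≠ 0, eval P (L j)) *
        (expandAt P f).trailingCoeff ^ n := by
  rw [map_mul, map_pow, Polynomial.trailingCoeff_mul, Polynomial.trailingCoeff_pow,
    trailingCoeff_expandAt_prod P hL0 hL1]

end MvPolynomial

section Catalan

variable {σ K ι : Type*} [Field K] [DecidableEq K] [DecidableEq ι] {L : ι → MvPolynomial σ K}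

theorem eval_prod_eq_zero_of_catalan (hL0 : ∀ j, L j ≠ 0) (hL1 : ∀ j, (L j).IsHomogeneous 1)
    (hprop : ∀ i j, i ≠ j → ∀ c : K, L i ≠ C c * L j) {S₀ S₁ S₂ : Finset ι} (hS : Disjoint S₀ S₁)
    {f g h : MvPolynomial σ K} (hf : f ≠ 0) (hg : g ≠ 0) (hh : h ≠ 0)
    (heq : (∏ j ∈ S₀, L j) * f ^ 3 + (∏ j ∈ S₁, L j) * g ^ 3 + (∏ j ∈ S₂, L j) * h ^ 3 = 0)
    {P : σ → K} (hP : #{j ∈ S₀ ∪ S₁ | eval P (L j) = 0} ≤ 3)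
    (h₀ : eval P (∏ j ∈ S₀, L j) = 0) (h₁ : eval P (∏ j ∈ S₁, L j) = 0) :
    eval P (∏ j ∈ S₂, L j) = 0 := by
  by_contra h₂
  have hvanish (s : Finset ι) :
      eval P (∏ j ∈ s, L j) = 0 ↔ {j ∈ s | eval P (L j) = 0}.Nonempty := by
    simp [prod_eq_zero_iff, Finset.Nonempty]
  have hT₀ : 0 < #{j ∈ S₀ | eval P (L j) = 0} := card_pos.mpr ((hvanish S₀).mp h₀)
  have hT₁ : 0 < #{j ∈ S₁ | eval P (L j) = 0} := card_pos.mpr ((hvanish S₁).mp h₁)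
  have hT₂ : #{j ∈ S₂ | eval P (L j) = 0} = 0 :=
    card_eq_zero.mpr (not_nonempty_iff_eq_empty.mp (mt (hvanish S₂).mpr h₂))
  have hT : #{j ∈ S₀ | eval P (L j) = 0} + #{j ∈ S₁ | eval P (L j) = 0} ≤ 3 := by
    rwa [← card_union_of_disjoint (disjoint_filter_filter hS), ← filter_union]
  have hne {s : Finset ι} {F : MvPolynomial σ K} (hF : F ≠ 0) :
      expandAt P ((∏ j ∈ s, L j) * F ^ 3) ≠ 0 :=
    expandAt_ne_zero P (mul_ne_zero (prod_ne_zero_iff.mpr fun j _ => hL0 j) (pow_ne_zero _ hF))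
  have hsum := congr(expandAt P $heq)
  rw [map_add, map_add, map_zero] at hsum
  have hdeg (s : Finset ι) {F : MvPolynomial σ K} (hF : F ≠ 0) :=
    natTrailingDegree_expandAt_prod_mul_pow P hL0 hL1 s hF 3
  obtain ⟨hdeg_eq, htc⟩ := Polynomial.trailingCoeff_add_eq_zero_of_add_add_eq_zero hsum
    (hne hf) (hne hg) (hne hh) (by rw [hdeg _ hf, hdeg _ hh]; omega)
    (by rw [hdeg _ hg, hdeg _ hh]; omega)
  rw [hdeg _ hf, hdeg _ hg] at hdeg_eq
  obtain ⟨j₀, hj₀⟩ := card_eq_one.mp (show #{j ∈ S₀ | eval P (L j) = 0} = 1 by omega)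
  obtain ⟨j₁, hj₁⟩ := card_eq_one.mp (show #{j ∈ S₁ | eval P (L j) = 0} = 1 by omega)
  rw [trailingCoeff_expandAt_prod_mul_pow P hL0 hL1, trailingCoeff_expandAt_prod_mul_pow P hL0 hL1,
    hj₀, hj₁, prod_singleton, prod_singleton] at htc
  have hj₀₁ : j₀ ≠ j₁ := by
    have hj₀S : j₀ ∈ S₀ := (mem_filter.mp (hj₀ ▸ mem_singleton_self j₀)).1
    have hj₁S : j₁ ∈ S₁ := (mem_filter.mp (hj₁ ▸ mem_singleton_self j₁)).1
    exact fun h => disjoint_left.mp hS hj₀S (h ▸ hj₁S)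
  have hc (s : Finset ι) : ∏ j ∈ s with eval P (L j) ≠ 0, eval P (L j) ≠ 0 :=
    prod_ne_zero_iff.mpr fun j hj => (mem_filter.mp hj).2
  exact mul_C_mul_pow_add_mul_C_mul_pow_ne_zero (hL1 j₀) (hL1 j₁) (hL0 j₀) (hL0 j₁)
    (hprop j₁ j₀ hj₀₁.symm) (hc S₀) (hc S₁)
    (Polynomial.trailingCoeff_nonzero_iff_nonzero.mpr (expandAt_ne_zero P hf))
    (Polynomial.trailingCoeff_nonzero_iff_nonzero.mpr (expandAt_ne_zero P hg)) (by norm_num) htc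

end Catalan

theorem stmt6_general
    (n : ℕ) (L : Fin n → MvPolynomial (Fin 3) ℂ)
    (hL0 : ∀ i, L i ≠ 0)
    (hL1 : ∀ i, (L i).IsHomogeneous 1)
    (hprop : ∀ i j, i ≠ j → ∀ c : ℂ, L i ≠ C c * L j)
    (hmult : ∀ P : Fin 3 → ℂ, P ≠ 0 →
      (Finset.univ.filter fun i => MvPolynomial.eval P (L i) = 0).card ≤ 3)
    (S : Fin 3 → Finset (Fin n))
    (hdisj : ∀ i j, i ≠ j → Disjoint (S i) (S j))
    (A : Fin 3 → MvPolynomial (Fin 3) ℂ)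
    (hA : ∀ i, A i = ∏ j ∈ S i, L j)
    (f g h : MvPolynomial (Fin 3) ℂ)
    (hf : f ≠ 0) (hg : g ≠ 0) (hh : h ≠ 0)
    (heq : A 0 * f ^ 3 + A 1 * g ^ 3 + A 2 * h ^ 3 = 0) :
    ∀ P : Fin 3 → ℂ, P ≠ 0 →
      (MvPolynomial.eval P (A 0) = 0 → MvPolynomial.eval P (A 1) = 0 →
        MvPolynomial.eval P (A 2) = 0) ∧
      (MvPolynomial.eval P (A 0) = 0 → MvPolynomial.eval P (A 2) = 0 →
        MvPolynomial.eval P (A 1) = 0) := by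
  intro P hP
  have hmult' (s : Finset (Fin n)) : #{j ∈ s | eval P (L j) = 0} ≤ 3 :=
    (card_le_card (filter_subset_filter _ (subset_univ s))).trans (hmult P hP)
  simp only [hA] at heq ⊢
  exact ⟨eval_prod_eq_zero_of_catalan hL0 hL1 hprop (hdisj 0 1 (by decide)) hf hg hh heq
      (hmult' _),
    eval_prod_eq_zero_of_catalan hL0 hL1 hprop (hdisj 0 2 (by decide)) hf hh hg
      (by linear_combination heq) (hmult' _)⟩

/-- if the Catalan equation `A₁f³ + A₂g³ + A₃h³ = 0` with `A₁` nonconstant and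
coefficients products of pairwise non-proportional linear forms (the arrangement having only
points of multiplicity 2 and 3) has a solution in nonzero homogeneous polynomials, then every
intersection point of the curve `A₁ = 0` with one of the curves `A₂ = 0`, `A₃ = 0` also lies on
the other. -/
theorem stmt6
    (n : ℕ) (L : Fin n → MvPolynomial (Fin 3) ℂ)
    (hL0 : ∀ i, L i ≠ 0)
    (hL1 : ∀ i, (L i).IsHomogeneous 1)
    (hprop : ∀ i j, i ≠ j → ∀ c : ℂ, L i ≠ C c * L j)
    (hmult : ∀ P : Fin 3 → ℂ, P ≠ 0 →
      (Finset.univ.filter fun i => MvPolynomial.eval P (L i) = 0).card ≤ 3)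
    (S : Fin 3 → Finset (Fin n))
    (hdisj : ∀ i j, i ≠ j → Disjoint (S i) (S j))
    (hcover : S 0 ∪ S 1 ∪ S 2 = Finset.univ)
    (A : Fin 3 → MvPolynomial (Fin 3) ℂ)
    (hA : ∀ i, A i = ∏ j ∈ S i, L j)
    (hA1nc : ∀ c : ℂ, A 0 ≠ C c)
    (f g h : MvPolynomial (Fin 3) ℂ)
    (hf : f ≠ 0) (hg : g ≠ 0) (hh : h ≠ 0)
    (hfhom : ∃ d, f.IsHomogeneous d)
    (hghom : ∃ d, g.IsHomogeneous d)
    (hhhom : ∃ d, h.IsHomogeneous d)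
    (heq : A 0 * f ^ 3 + A 1 * g ^ 3 + A 2 * h ^ 3 = 0) :
    ∀ P : Fin 3 → ℂ, P ≠ 0 →
      (MvPolynomial.eval P (A 0) = 0 → MvPolynomial.eval P (A 1) = 0 →
        MvPolynomial.eval P (A 2) = 0) ∧
      (MvPolynomial.eval P (A 0) = 0 → MvPolynomial.eval P (A 2) = 0 →
        MvPolynomial.eval P (A 1) = 0) :=
  stmt6_general n L hL0 hL1 hprop hmult S hdisj A hA f g h hf hg hh heq
end

section
/- Let F₁, F₃ ∈ ℂ[x,y,z] be homogeneous polynomials of the same degree and set F₂ = F₃ − F₁ (so that F₁, F₂, F₃ form a pencil with F₁ + F₂ = F₃). Then the triple f = F₁ − 2F₃, g = F₁ + F₃, h = F₃ − 2F₁ satisfies the Catalan equation F₁·f³ + F₂·g³ = F₃·h³, i.e. F₁(F₁ − 2F₃)³ + (F₃ − F₁)(F₁ + F₃)³ = F₃(F₃ − 2F₁)³. (This solution arises from the duplication law on the elliptic curve y² = x³ + 1 applied to the tautological solution f = g = h = 1 of a Catalan equation composed of a pencil.) -/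
theorem stmt8_general
    (F₁ F₂ F₃ : MvPolynomial (Fin 3) ℂ)
    (hF₂ : F₂ = F₃ - F₁) :
    F₁ * (F₁ - 2 * F₃) ^ 3 + F₂ * (F₁ + F₃) ^ 3 = F₃ * (F₃ - 2 * F₁) ^ 3 := by
  subst hF₂
  ring

/-- for a pencil `F₂ = F₃ − F₁` (with `F₁, F₃` homogeneous of the same degree), the
triple `f = F₁ − 2F₃`, `g = F₁ + F₃`, `h = F₃ − 2F₁` solves the Catalan equation
`F₁f³ + F₂g³ = F₃h³`. This solution arises from the duplication law on the elliptic curve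
`y² = x³ + 1` applied to the tautological solution `f = g = h = 1`. -/
theorem stmt8
    (F₁ F₂ F₃ : MvPolynomial (Fin 3) ℂ) (d : ℕ)
    (hF₁ : F₁.IsHomogeneous d) (hF₃ : F₃.IsHomogeneous d)
    (hF₂ : F₂ = F₃ - F₁) :
    F₁ * (F₁ - 2 * F₃) ^ 3 + F₂ * (F₁ + F₃) ^ 3 = F₃ * (F₃ - 2 * F₁) ^ 3 :=
  stmt8_general F₁ F₂ F₃ hF₂
end

section
/- Consider the nine lines in the complex projective plane ℙ²(ℂ) given by the nine linear factors of (x³ − y³)(x³ − z³)(y³ − z³), namely the lines x = ωy, x = ωz, y = ωz for ω ranging over the cube roots of unity. Then this arrangement has no double points and exactly 12 triple points: every point of ℙ²(ℂ) lying on at least two of the nine lines lies on exactly three of them, and the set of such points has exactly 12 elements. -/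
/-- The set of lines of the arrangement given by the nine linear factors of
`(x³ − y³)(x³ − z³)(y³ − z³)` passing through the point with homogeneous coordinates `P`:
a line is encoded as a pair `(ω, k)` with `ω³ = 1`, where `k = 0, 1, 2` encodes the lines
`x = ωy`, `x = ωz`, `y = ωz` respectively. -/
def linesThrough (P : Fin 3 → ℂ) : Set (ℂ × Fin 3) :=
  {q | q.1 ^ 3 = 1 ∧
    ![P 0 = q.1 * P 1, P 0 = q.1 * P 2, P 1 = q.1 * P 2] q.2}

/-- The number of the nine lines passing through the point `P`. -/
noncomputable def numLines (P : Fin 3 → ℂ) : ℕ :=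
  (linesThrough P).ncard

/-!
The lines through a point `v` fall into three families, `x = ωy`, `x = ωz` and `y = ωz`. The
family comparing coordinates `a = v_i` and `b = v_j` contributes the cube roots `ω` with
`a = ω b`: all three of them if `a = b = 0`, none if only `b` vanishes, and otherwise exactly
one or none according as `a³ = b³` or not. A case split on which coordinates vanish shows that a
point on two lines is either one of the 3 coordinate points or has `v₀³ = v₁³ = v₂³ ≠ 0`, i.e. is
one of the 9 points `(1 : ω : ω')`; each of these 12 points lies on exactly three lines.
-/

open scoped LinearAlgebra.Projectivization

open Projectivization

lemma ncard_setOf_fst_mem {α ι : Type*} [Fintype ι] (S : ι → Set α) (hS : ∀ i, (S i).Finite) :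
    {q : α × ι | q.1 ∈ S q.2}.ncard = ∑ i, (S i).ncard := by
  let e : {q : α × ι | q.1 ∈ S q.2} ≃ Σ i, S i :=
    { toFun q := ⟨q.1.2, q.1.1, q.2⟩
      invFun x := ⟨(x.2, x.1), x.2.2⟩
      left_inv _ := rfl
      right_inv _ := rfl }
  have := fun i => (hS i).to_subtype
  simp only [← Nat.card_coe_set_eq, Nat.card_congr e, Nat.card_sigma]

lemma ncard_cube_roots_of_unity : {ω : ℂ | ω ^ 3 = 1}.ncard = 3 := by
  have h : {ω : ℂ | ω ^ 3 = 1} = Polynomial.nthRootsFinset 3 (1 : ℂ) := by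
    ext
    simp
  rw [h, Set.ncard_coe_finset,
    (Complex.isPrimitiveRoot_exp 3 (by norm_num)).card_nthRootsFinset]

lemma card_cube_roots_of_unity : Nat.card {ω : ℂ // ω ^ 3 = 1} = 3 :=
  (Nat.card_coe_set_eq _).trans ncard_cube_roots_of_unity

section CubeRootRatios

/-- The lines `X = ω Y` of one family passing through a point with `X`-coordinate `a` and
`Y`-coordinate `b`, recorded by their slopes `ω`. -/
def cubeRootRatios (a b : ℂ) : Set ℂ := {ω | ω ^ 3 = 1 ∧ a = ω * b}

variable {a b : ℂ}

lemma cubeRootRatios_finite : (cubeRootRatios a b).Finite :=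
  (Set.finite_of_ncard_ne_zero (ncard_cube_roots_of_unity.trans_ne three_ne_zero)).subset
    fun _ h => h.1

@[simp]
lemma ncard_cubeRootRatios_zero_zero : (cubeRootRatios 0 0).ncard = 3 := by
  simpa [cubeRootRatios] using ncard_cube_roots_of_unity

@[simp]
lemma cubeRootRatios_zero_left (hb : b ≠ 0) : cubeRootRatios 0 b = ∅ := by
  ext ω
  simpa [cubeRootRatios, hb] using
    fun h : ω ^ 3 = 1 => (IsUnit.of_pow_eq_one h three_ne_zero).ne_zero

@[simp]
lemma cubeRootRatios_zero_right (ha : a ≠ 0) : cubeRootRatios a 0 = ∅ := by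
  ext
  simp [cubeRootRatios, ha]

lemma cubeRootRatios_of_ne_zero (hb : b ≠ 0) :
    cubeRootRatios a b = if a ^ 3 = b ^ 3 then {a / b} else ∅ := by
  have hcube : (a / b) ^ 3 = 1 ↔ a ^ 3 = b ^ 3 := by
    rw [div_pow, div_eq_one_iff_eq (pow_ne_zero 3 hb)]
  ext ω
  rw [cubeRootRatios, Set.mem_ofPred_eq, ← div_eq_iff hb]
  split_ifs with h
  · exact ⟨fun ⟨_, hω⟩ => hω.symm, fun hω => ⟨hω ▸ hcube.2 h, hω.symm⟩⟩
  · exact ⟨fun ⟨hω, hab⟩ => h (hcube.1 (hab ▸ hω)), False.elim⟩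

@[simp]
lemma ncard_cubeRootRatios_of_ne_zero (hb : b ≠ 0) :
    (cubeRootRatios a b).ncard = if a ^ 3 = b ^ 3 then 1 else 0 := by
  rw [cubeRootRatios_of_ne_zero hb]
  split_ifs <;> simp

end CubeRootRatios

section NumLines

lemma numLines_eq (v : Fin 3 → ℂ) :
    numLines v = (cubeRootRatios (v 0) (v 1)).ncard + (cubeRootRatios (v 0) (v 2)).ncard +
      (cubeRootRatios (v 1) (v 2)).ncard := by
  have h : linesThrough v = {q | q.1 ∈ ![cubeRootRatios (v 0) (v 1), cubeRootRatios (v 0) (v 2),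
      cubeRootRatios (v 1) (v 2)] q.2} := by
    ext ⟨ω, k⟩
    fin_cases k <;> rfl
  rw [numLines, h, ncard_setOf_fst_mem, Fin.sum_univ_three]
  · rfl
  · intro k
    fin_cases k <;> exact cubeRootRatios_finite

lemma linesThrough_smul {c : ℂ} (hc : c ≠ 0) (v : Fin 3 → ℂ) :
    linesThrough (c • v) = linesThrough v := by
  have key (ω a b : ℂ) : c * a = ω * (c * b) ↔ a = ω * b := by
    rw [mul_left_comm, mul_right_inj' hc]
  ext ⟨ω, k⟩
  fin_cases k <;> simp [linesThrough, key]

lemma numLines_rep_mk {v : Fin 3 → ℂ} (hv : v ≠ 0) : numLines (mk ℂ v hv).rep = numLines v := by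
  obtain ⟨a, ha⟩ := exists_smul_eq_mk_rep ℂ v hv
  rw [← ha, numLines, Units.smul_def, linesThrough_smul a.ne_zero, numLines]

lemma numLines_single (i : Fin 3) : numLines (Pi.single i 1) = 3 := by
  fin_cases i <;> simp [numLines_eq]

lemma numLines_cube_roots {ω ω' : ℂ} (hω : ω ^ 3 = 1) (hω' : ω' ^ 3 = 1) :
    numLines ![1, ω, ω'] = 3 := by
  have hω0 : ω ≠ 0 := (IsUnit.of_pow_eq_one hω three_ne_zero).ne_zero
  have hω'0 : ω' ≠ 0 := (IsUnit.of_pow_eq_one hω' three_ne_zero).ne_zero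
  simp [numLines_eq, hω, hω', hω0, hω'0]

end NumLines

section TriplePoints

noncomputable def coordPoint (i : Fin 3) : ℙ ℂ (Fin 3 → ℂ) :=
  mk ℂ (Pi.single i 1) (by simp)

noncomputable def rootPoint (w : {ω : ℂ // ω ^ 3 = 1} × {ω : ℂ // ω ^ 3 = 1}) :
    ℙ ℂ (Fin 3 → ℂ) :=
  mk ℂ ![1, w.1, w.2] (fun h => by simpa using congrFun h 0)

noncomputable def triplePoints : Set (ℙ ℂ (Fin 3 → ℂ)) :=
  Set.range (Sum.elim coordPoint rootPoint)

lemma numLines_rep_of_mem_triplePoints {p : ℙ ℂ (Fin 3 → ℂ)} (hp : p ∈ triplePoints) :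
    numLines p.rep = 3 := by
  rcases hp with ⟨i | w, rfl⟩
  · exact (numLines_rep_mk _).trans (numLines_single i)
  · exact (numLines_rep_mk _).trans (numLines_cube_roots w.1.2 w.2.2)

lemma mk_eq_coordPoint {v : Fin 3 → ℂ} (hv : v ≠ 0) {i : Fin 3} (h : ∀ j ≠ i, v j = 0) :
    mk ℂ v hv = coordPoint i := by
  rw [coordPoint, mk_eq_mk_iff']
  refine ⟨v i, funext fun j => ?_⟩
  by_cases hj : j = i
  · simp [hj]
  · simp [hj, h j hj]

lemma mk_eq_rootPoint {v : Fin 3 → ℂ} (hv : v ≠ 0) (h0 : v 0 ≠ 0) (h01 : v 0 ^ 3 = v 1 ^ 3)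
    (h02 : v 0 ^ 3 = v 2 ^ 3) :
    mk ℂ v hv = rootPoint (⟨v 1 / v 0, by rw [div_pow, ← h01, div_self (pow_ne_zero 3 h0)]⟩,
      ⟨v 2 / v 0, by rw [div_pow, ← h02, div_self (pow_ne_zero 3 h0)]⟩) := by
  rw [rootPoint, mk_eq_mk_iff']
  refine ⟨v 0, funext fun j => ?_⟩
  fin_cases j <;> simp [mul_div_cancel₀ _ h0]

lemma mk_mem_triplePoints_of_two_le_numLines {v : Fin 3 → ℂ} (hv : v ≠ 0)
    (h : 2 ≤ numLines v) : mk ℂ v hv ∈ triplePoints := by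
  rw [numLines_eq] at h
  by_cases h0 : v 0 = 0 <;> by_cases h1 : v 1 = 0 <;> by_cases h2 : v 2 = 0
  · exact absurd (funext fun i => by fin_cases i <;> assumption) hv
  · exact ⟨Sum.inl 2, (mk_eq_coordPoint hv fun j _ => by fin_cases j <;> simp_all).symm⟩
  · exact ⟨Sum.inl 1, (mk_eq_coordPoint hv fun j _ => by fin_cases j <;> simp_all).symm⟩
  · simp [h0, h1, h2] at h
    split_ifs at h <;> omega
  · exact ⟨Sum.inl 0, (mk_eq_coordPoint hv fun j _ => by fin_cases j <;> simp_all).symm⟩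
  · simp [h0, h1, h2] at h
    split_ifs at h <;> omega
  · simp [h0, h1, h2] at h
    split_ifs at h <;> omega
  · have hcubes : v 0 ^ 3 = v 1 ^ 3 ∧ v 0 ^ 3 = v 2 ^ 3 := by
      simp only [ncard_cubeRootRatios_of_ne_zero h1, ncard_cubeRootRatios_of_ne_zero h2] at h
      split_ifs at h <;> first | omega | grind
    exact ⟨Sum.inr _, (mk_eq_rootPoint hv h0 hcubes.1 hcubes.2).symm⟩

lemma coordPoint_injective : Function.Injective coordPoint := by
  intro i j h
  obtain ⟨a, ha⟩ := (mk_eq_mk_iff' ℂ _ _ _ _).1 h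
  by_contra hij
  simpa [hij] using congrFun ha i

lemma rootPoint_injective : Function.Injective rootPoint := by
  rintro ⟨⟨ω₁, _⟩, ⟨ω₂, _⟩⟩ ⟨⟨ω₁', _⟩, ⟨ω₂', _⟩⟩ h
  obtain ⟨a, ha⟩ := (mk_eq_mk_iff' ℂ _ _ _ _).1 h
  have h0 : a = 1 := by simpa using congrFun ha 0
  have h1 := congrFun ha 1
  have h2 := congrFun ha 2
  simp_all

lemma coordPoint_ne_rootPoint (i : Fin 3) (w : {ω : ℂ // ω ^ 3 = 1} × {ω : ℂ // ω ^ 3 = 1}) :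
    coordPoint i ≠ rootPoint w := by
  obtain ⟨⟨ω₁, hω₁⟩, -⟩ := w
  have hω₁0 : ω₁ ≠ 0 := (IsUnit.of_pow_eq_one hω₁ three_ne_zero).ne_zero
  intro h
  obtain ⟨a, ha⟩ := (mk_eq_mk_iff' ℂ _ _ _ _).1 h
  have h0 := congrFun ha 0
  have h1 := congrFun ha 1
  have h2 := congrFun ha 2
  fin_cases i <;> simp_all

lemma ncard_triplePoints : triplePoints.ncard = 12 := by
  have := Nat.finite_of_card_ne_zero (card_cube_roots_of_unity.trans_ne three_ne_zero)
  rw [triplePoints, Set.ncard_range_of_injective (coordPoint_injective.sumElim rootPoint_injective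
    coordPoint_ne_rootPoint), Nat.card_sum, Nat.card_prod, card_cube_roots_of_unity, Nat.card_fin]

end TriplePoints

/-- the arrangement of the nine lines given by the linear factors of
`(x³ − y³)(x³ − z³)(y³ − z³)` in `ℙ²(ℂ)` has no double points and exactly 12 triple points:
every point lying on at least two of the lines lies on exactly three of them, and the set of
such points has exactly 12 elements. -/
theorem stmt9 :
    (∀ p : Projectivization ℂ (Fin 3 → ℂ),
      2 ≤ numLines p.rep → numLines p.rep = 3) ∧
    {p : Projectivization ℂ (Fin 3 → ℂ) | 2 ≤ numLines p.rep}.ncard = 12 := by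
  have two_le_iff (p : ℙ ℂ (Fin 3 → ℂ)) : 2 ≤ numLines p.rep ↔ p ∈ triplePoints :=
    ⟨fun h => p.mk_rep ▸ mk_mem_triplePoints_of_two_le_numLines p.rep_nonzero h,
      fun h => (numLines_rep_of_mem_triplePoints h).symm ▸ by norm_num⟩
  refine ⟨fun p hp => numLines_rep_of_mem_triplePoints ((two_le_iff p).1 hp), ?_⟩
  rw [show {p | 2 ≤ numLines p.rep} = triplePoints from Set.ext two_le_iff, ncard_triplePoints]
end
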